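/- The CPS type translation of EPCF is well-defined and strictly decreasing in no sense but preserves typability: if Γ ⊢ V : T in EPCF then Γ* ⊢ V* : T* in the λY-calculus, and if Γ ⊢ C : U in EPCF then Γ* ⊢ C* : ¬¬U* (where ¬T denotes T → o). -/

import Mathlib

/-! The λY-calculus: simply-typed λ-calculus with a fixpoint combinator Y and
first-order constants drawn from a signature `F` with arity `ar : F → ℕ`. -/

namespace LamY

/-- Simple types: `o` and arrow types. -/
inductive Ty : Type
  | o : Ty
  | arr : Ty → Ty → Ty
  deriving DecidableEq

/-- Terms (de Bruijn representation) over a set `F` of first-order constants. -/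
inductive Tm (F : Type) : Type
  | var : ℕ → Tm F
  | lam : Tm F → Tm F
  | app : Tm F → Tm F → Tm F
  | fixY : Tm F → Tm F
  | const : F → Tm F

namespace Tm

variable {F : Type}

/-- Lifting of a renaming under a binder. -/
def upr (ρ : ℕ → ℕ) : ℕ → ℕ
  | 0 => 0
  | n + 1 => ρ n + 1

/-- Renaming of variables. -/
def rename (ρ : ℕ → ℕ) : Tm F → Tm F
  | .var n => .var (ρ n)
  | .lam M => .lam (rename (upr ρ) M)
  | .app M N => .app (rename ρ M) (rename ρ N)
  | .fixY M => .fixY (rename ρ M)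
  | .const f => .const f

/-- Shift all free variables up by one. -/
def lift (M : Tm F) : Tm F := rename Nat.succ M

/-- Lifting of a substitution under a binder. -/
def ups (σ : ℕ → Tm F) : ℕ → Tm F
  | 0 => .var 0
  | n + 1 => lift (σ n)

/-- Simultaneous substitution. -/
def subst (σ : ℕ → Tm F) : Tm F → Tm F
  | .var n => σ n
  | .lam M => .lam (subst (ups σ) M)
  | .app M N => .app (subst σ M) (subst σ N)
  | .fixY M => .fixY (subst σ M)
  | .const f => .const f

/-- Substitution `M[N/x]` of `N` for the variable `0` in `M`. -/
def subst0 (N : Tm F) (M : Tm F) : Tm F :=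
  subst (fun n => match n with | 0 => N | n + 1 => .var n) M

/-- A term applied to a list of arguments: `appArgs M [N₁,…,Nₖ] = M N₁ ⋯ Nₖ`. -/
def appArgs (M : Tm F) : List (Tm F) → Tm F
  | [] => M
  | N :: Ns => appArgs (.app M N) Ns

end Tm

open Tm

/-- Weak head reduction: β at the head, unfolding of `Y`, and reduction of the
head of an application. -/
inductive Step {F : Type} : Tm F → Tm F → Prop
  | beta (M N : Tm F) : Step (.app (.lam M) N) (subst0 N M)
  | fix (M : Tm F) : Step (.fixY M) (.app M (.fixY M))
  | appL {M M' : Tm F} (N : Tm F) : Step M M' → Step (.app M N) (.app M' N)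

/-- A term is in weak head normal form when no weak head reduction applies. -/
def WHNF {F : Type} (M : Tm F) : Prop := ¬ ∃ N, Step M N

/-- The type `o^n → o` of a first-order constant with arity `n`. -/
def constTy : ℕ → Ty
  | 0 => .o
  | n + 1 => .arr .o (constTy n)

/-- Typing judgement for λY-terms. Contexts are lists of types (de Bruijn). -/
inductive HasTy {F : Type} (ar : F → ℕ) : List Ty → Tm F → Ty → Prop
  | var {Γ n T} : Γ[n]? = some T → HasTy ar Γ (.var n) T
  | lam {Γ M T U} : HasTy ar (T :: Γ) M U → HasTy ar Γ (.lam M) (.arr T U)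
  | app {Γ M N T U} : HasTy ar Γ M (.arr T U) → HasTy ar Γ N T →
      HasTy ar Γ (.app M N) U
  | fix {Γ M T} : HasTy ar Γ M (.arr T T) → HasTy ar Γ (.fixY M) T
  | const {Γ} (f : F) : HasTy ar Γ (.const f) (constTy (ar f))

end LamY

/-! EPCF: a fine-grained call-by-value calculus with algebraic operations and
fixpoints. The signature consists of: base types `BV`, constant values `CV`
(with `cvTy : CV → BV`), and algebraic operations `Op` with parameter base
type `opPar : Op → BV` and arity `opAr : Op → ℕ`. -/

namespace EPCF

/-- EPCF types: base types, finite enumeration types `k`, and arrows. -/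
inductive ETy (BV : Type) : Type
  | base : BV → ETy BV
  | enum : ℕ → ETy BV
  | arr : ETy BV → ETy BV → ETy BV

mutual
/-- EPCF values (de Bruijn representation). -/
inductive Val (CV Op : Type) : Type
  | cv : CV → Val CV Op                        -- constant value
  | num : ℕ → ℕ → Val CV Op                    -- `num n k` is `n̲ : k`
  | var : ℕ → Val CV Op
  | lam : Comp CV Op → Val CV Op
  | fixv : Val CV Op → Val CV Op
/-- EPCF computations (de Bruijn representation). `opc σ V C` is the algebraic
operation `σ(V; x.C)` (the continuation `C` binds `x`), and
`case k V Cs` is `case(V; C₀,…,C_{k-1})`. -/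
inductive Comp (CV Op : Type) : Type
  | app : Val CV Op → Val CV Op → Comp CV Op
  | ret : Val CV Op → Comp CV Op
  | letin : Comp CV Op → Comp CV Op → Comp CV Op
  | opc : Op → Val CV Op → Comp CV Op → Comp CV Op
  | case : (k : ℕ) → Val CV Op → (Fin k → Comp CV Op) → Comp CV Op
end

variable {CV Op : Type}

/-- Lifting of a renaming under a binder. -/
def upr (ρ : ℕ → ℕ) : ℕ → ℕ
  | 0 => 0
  | n + 1 => ρ n + 1

mutual
/-- Renaming of variables in values. -/
def renV (ρ : ℕ → ℕ) : Val CV Op → Val CV Op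
  | .cv v => .cv v
  | .num n k => .num n k
  | .var n => .var (ρ n)
  | .lam C => .lam (renC (upr ρ) C)
  | .fixv V => .fixv (renV (upr ρ) V)
/-- Renaming of variables in computations. -/
def renC (ρ : ℕ → ℕ) : Comp CV Op → Comp CV Op
  | .app V W => .app (renV ρ V) (renV ρ W)
  | .ret V => .ret (renV ρ V)
  | .letin C B => .letin (renC ρ C) (renC (upr ρ) B)
  | .opc σ V C => .opc σ (renV ρ V) (renC (upr ρ) C)
  | .case k V Cs => .case k (renV ρ V) (fun i => renC ρ (Cs i))
end

/-- Lifting of a substitution under a binder. -/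
def upsE (σ : ℕ → Val CV Op) : ℕ → Val CV Op
  | 0 => .var 0
  | n + 1 => renV Nat.succ (σ n)

mutual
/-- Simultaneous substitution of values for variables, in values. -/
def subV (σ : ℕ → Val CV Op) : Val CV Op → Val CV Op
  | .cv v => .cv v
  | .num n k => .num n k
  | .var n => σ n
  | .lam C => .lam (subC (upsE σ) C)
  | .fixv V => .fixv (subV (upsE σ) V)
/-- Simultaneous substitution of values for variables, in computations. -/
def subC (σ : ℕ → Val CV Op) : Comp CV Op → Comp CV Op
  | .app V W => .app (subV σ V) (subV σ W)
  | .ret V => .ret (subV σ V)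
  | .letin C B => .letin (subC σ C) (subC (upsE σ) B)
  | .opc op V C => .opc op (subV σ V) (subC (upsE σ) C)
  | .case k V Cs => .case k (subV σ V) (fun i => subC σ (Cs i))
end

/-- Substitution `C[W/x]` of the value `W` for the variable `0`. -/
def subst0C (W : Val CV Op) (C : Comp CV Op) : Comp CV Op :=
  subC (fun n => match n with | 0 => W | n + 1 => .var n) C

/-- Substitution `V[W/x]` of the value `W` for the variable `0`. -/
def subst0V (W : Val CV Op) (V : Val CV Op) : Val CV Op :=
  subV (fun n => match n with | 0 => W | n + 1 => .var n) V

/-- The reduction relation of EPCF. -/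
inductive EStep : Comp CV Op → Comp CV Op → Prop
  | beta (C : Comp CV Op) (W : Val CV Op) :
      EStep (.app (.lam C) W) (subst0C W C)
  | fix (V W : Val CV Op) :
      EStep (.app (.fixv V) W) (.app (subst0V (.fixv V) V) W)
  | case {n k : ℕ} (h : n < k) (Cs : Fin k → Comp CV Op) :
      EStep (.case k (.num n k) Cs) (Cs ⟨n, h⟩)
  | letRet (V : Val CV Op) (C : Comp CV Op) :
      EStep (.letin (.ret V) C) (subst0C V C)
  | letCong {C C' : Comp CV Op} (B : Comp CV Op) :
      EStep C C' → EStep (.letin C B) (.letin C' B)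
  | letOp (σ : Op) (V : Val CV Op) (C D : Comp CV Op) :
      EStep (.letin (.opc σ V C) D) (.opc σ V (.letin C (renC (upr Nat.succ) D)))

/-! Typing of EPCF. -/
section Typing

variable {BV : Type} (cvTy : CV → BV) (opPar : Op → BV) (opAr : Op → ℕ)

mutual
/-- Typing judgment for EPCF values. -/
inductive VTy : List (ETy BV) → Val CV Op → ETy BV → Prop
  | cv {Γ} (v : CV) : VTy Γ (.cv v) (.base (cvTy v))
  | num {Γ n k} : n < k → VTy Γ (.num n k) (.enum k)
  | var {Γ n T} : Γ[n]? = some T → VTy Γ (.var n) T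
  | lam {Γ C T U} : CTy (T :: Γ) C U → VTy Γ (.lam C) (.arr T U)
  | fixv {Γ V T U} : VTy ((ETy.arr T U) :: Γ) V (ETy.arr T U) →
      VTy Γ (.fixv V) (.arr T U)
/-- Typing judgment for EPCF computations. -/
inductive CTy : List (ETy BV) → Comp CV Op → ETy BV → Prop
  | app {Γ V W T U} : VTy Γ V (.arr T U) → VTy Γ W T → CTy Γ (.app V W) U
  | ret {Γ V T} : VTy Γ V T → CTy Γ (.ret V) T
  | letin {Γ C B T U} : CTy Γ C T → CTy (T :: Γ) B U →
      CTy Γ (.letin C B) U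
  | opc {Γ σ V C T} : VTy Γ V (.base (opPar σ)) →
      CTy ((ETy.enum (opAr σ)) :: Γ) C T → CTy Γ (.opc σ V C) T
  | case {Γ k V T} {Cs : Fin k → Comp CV Op} : VTy Γ V (.enum k) →
      (∀ i, CTy Γ (Cs i) T) → CTy Γ (.case k V Cs) T
end

end Typing

end EPCF

namespace EPCF

open LamY LamY.Tm

variable {CV Op : Type}

/-- The λY signature `Σ_Y = {v : 0 | v ∈ CV} ∪ {σ : k+1 | (σ : B ⇝ k) ∈ Σ}`
targeted by the CPS translation. -/
def arF (opAr : Op → ℕ) : CV ⊕ Op → ℕ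
  | .inl _ => 0
  | .inr σ => opAr σ + 1

/-- Negation `¬T = T → o` of λY types. -/
def notTy (T : Ty) : Ty := .arr T .o

/-- CPS translation of EPCF types: `B* = o`, `k* = ¬(o^k)` and
`(T → U)* = T* → ¬U* → o`. -/
def trTy {BV : Type} : ETy BV → Ty
  | .base _ => .o
  | .enum k => constTy k
  | .arr T U => .arr (trTy T) (.arr (notTy (trTy U)) .o)

/-- The λY representation `λx₀…x_{k−1}.xₙ` of the numeral `n̲ : k`. -/
def numStar (k n : ℕ) : Tm (CV ⊕ Op) :=
  (List.range k).foldr (fun _ M => .lam M) (.var (k - 1 - n))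

/-! CPS translation of EPCF terms to the λY-calculus. -/
section CPS

variable (opAr : Op → ℕ)

mutual
/-- CPS translation of values. -/
def trV (opAr : Op → ℕ) : Val CV Op → Tm (CV ⊕ Op)
  | .cv v => .const (Sum.inl v)
  | .num n k => numStar k n
  | .var n => .var n
  | .lam C => .lam (trC opAr C)
  | .fixv V => .fixY (.lam (trV opAr V))
/-- CPS translation of computations: `C*` expects a continuation `c`. -/
def trC (opAr : Op → ℕ) : Comp CV Op → Tm (CV ⊕ Op)
  | .app V W => .lam (.app (.app (lift (trV opAr V)) (lift (trV opAr W))) (.var 0))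
  | .ret V => .lam (.app (.var 0) (lift (trV opAr V)))
  | .letin C B =>
      .lam (.app (lift (trC opAr C))
        (.lam (.app (rename (upr Nat.succ) (trC opAr B)) (.var 1))))
  | .opc σ V C =>
      .lam (appArgs (.const (.inr σ))
        (lift (trV opAr V) ::
          List.ofFn (fun i : Fin (opAr σ) =>
            .app (lift (subst0 (numStar (opAr σ) i) (trC opAr C))) (.var 0))))
  | .case k V Cs =>
      .lam (appArgs (lift (trV opAr V))
        (List.ofFn fun i : Fin k => .app (lift (trC opAr (Cs i))) (.var 0)))
end

end CPS

end EPCF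

/-! By simultaneous induction on EPCF typing derivations. Each `C*` abstracts a continuation
variable, so the translated subterms are used under one more binder (weakening); the
continuation of an operation `σ(V; x.C)` is instantiated with the numerals `i̲*`, which is
typed by the substitution lemma since `i̲* : (opAr σ)*`. -/

namespace LamY

open Tm

variable {F : Type} {ar : F → ℕ}

theorem HasTy.rename {Γ : List Ty} {M : Tm F} {T : Ty} (h : HasTy ar Γ M T) :
    ∀ {Δ : List Ty} {ρ : ℕ → ℕ}, (∀ n U, Γ[n]? = some U → Δ[ρ n]? = some U) →
      HasTy ar Δ (M.rename ρ) T := by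
  induction h with
  | var h => exact fun hρ => .var (hρ _ _ h)
  | lam _ ih =>
    refine fun hρ => .lam (ih fun n U hn => ?_)
    cases n with
    | zero => exact hn
    | succ n => exact hρ n U hn
  | app _ _ ih₁ ih₂ => exact fun hρ => .app (ih₁ hρ) (ih₂ hρ)
  | fix _ ih => exact fun hρ => .fix (ih hρ)
  | const f => exact fun _ => .const f

theorem HasTy.lift {Γ : List Ty} {M : Tm F} {T : Ty} (A : Ty) (h : HasTy ar Γ M T) :
    HasTy ar (A :: Γ) (lift M) T :=
  h.rename fun _ _ hn => hn

theorem HasTy.subst {Γ : List Ty} {M : Tm F} {T : Ty} (h : HasTy ar Γ M T) :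
    ∀ {Δ : List Ty} {σ : ℕ → Tm F}, (∀ n U, Γ[n]? = some U → HasTy ar Δ (σ n) U) →
      HasTy ar Δ (M.subst σ) T := by
  induction h with
  | var h => exact fun hσ => hσ _ _ h
  | lam _ ih =>
    refine fun hσ => .lam (ih fun n U hn => ?_)
    cases n with
    | zero => exact .var hn
    | succ n => exact (hσ n U hn).lift _
  | app _ _ ih₁ ih₂ => exact fun hσ => .app (ih₁ hσ) (ih₂ hσ)
  | fix _ ih => exact fun hσ => .fix (ih hσ)
  | const f => exact fun _ => .const f

theorem HasTy.subst0 {Γ : List Ty} {M N : Tm F} {A T : Ty} (hM : HasTy ar (A :: Γ) M T)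
    (hN : HasTy ar Γ N A) : HasTy ar Γ (subst0 N M) T :=
  hM.subst fun n U hn => by
    cases n with
    | zero => exact Option.some.inj hn ▸ hN
    | succ n => exact .var hn

theorem HasTy.foldr_lam {Γ : List Ty} {M : Tm F} (l : List ℕ)
    (h : HasTy ar (List.replicate l.length .o ++ Γ) M .o) :
    HasTy ar Γ (l.foldr (fun _ M => .lam M) M) (constTy l.length) := by
  induction l generalizing Γ with
  | nil => exact h
  | cons _ l ih =>
    refine .lam (ih ?_)
    rwa [← List.singleton_append, ← List.append_assoc, ← List.replicate_succ',
      List.replicate_succ, List.cons_append]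

theorem HasTy.appArgs {Γ : List Ty} {M : Tm F} (Ns : List (Tm F))
    (hM : HasTy ar Γ M (constTy Ns.length)) (hNs : ∀ N ∈ Ns, HasTy ar Γ N .o) :
    HasTy ar Γ (Tm.appArgs M Ns) .o := by
  induction Ns generalizing M with
  | nil => exact hM
  | cons N Ns ih =>
    exact ih (.app hM (hNs N List.mem_cons_self)) fun N' hN' =>
      hNs N' (List.mem_cons_of_mem _ hN')

theorem HasTy.appArgs_ofFn {Γ : List Ty} {M : Tm F} {k : ℕ} (N : Fin k → Tm F)
    (hM : HasTy ar Γ M (constTy k)) (hN : ∀ i, HasTy ar Γ (N i) .o) :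
    HasTy ar Γ (Tm.appArgs M (List.ofFn N)) .o :=
  .appArgs _ (by rwa [List.length_ofFn]) fun _ h =>
    let ⟨i, hi⟩ := List.mem_ofFn.mp h
    hi ▸ hN i

end LamY

namespace EPCF

open LamY LamY.Tm

variable {CV Op : Type} {opAr : Op → ℕ}

theorem hasTy_numStar {k n : ℕ} (h : n < k) (Γ : List Ty) :
    HasTy (arF opAr) Γ (numStar k n : Tm (CV ⊕ Op)) (constTy k) := by
  have hx : HasTy (arF (CV := CV) opAr) (List.replicate (List.range k).length .o ++ Γ)
      (.var (k - 1 - n)) .o :=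
    .var (by
      rw [List.getElem?_append_left (by simp; omega),
        List.getElem?_replicate_of_lt (by simp; omega)])
  simpa [numStar] using HasTy.foldr_lam (List.range k) hx

theorem hasTy_rename_upr_succ {F : Type} {ar : F → ℕ} {Γ : List Ty} {M : Tm F} {A B T : Ty}
    (h : HasTy ar (A :: Γ) M T) : HasTy ar (A :: B :: Γ) (M.rename (upr Nat.succ)) T :=
  h.rename fun n _ hn => by cases n <;> exact hn

variable {BV : Type} {cvTy : CV → BV} {opPar : Op → BV}

mutual

theorem VTy.hasTy_trV {Γ : List (ETy BV)} {V : Val CV Op} {T : ETy BV} :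
    VTy cvTy opPar opAr Γ V T → HasTy (arF opAr) (Γ.map trTy) (trV opAr V) (trTy T)
  | .cv v => .const (Sum.inl v)
  | .num h => hasTy_numStar h _
  | .var h => .var (by simp [h])
  | .lam hC => .lam hC.hasTy_trC
  | .fixv hV => .fix (.lam hV.hasTy_trV)

theorem CTy.hasTy_trC {Γ : List (ETy BV)} {C : Comp CV Op} {U : ETy BV} :
    CTy cvTy opPar opAr Γ C U →
      HasTy (arF opAr) (Γ.map trTy) (trC opAr C) (notTy (notTy (trTy U)))
  | .app hV hW => .lam (.app (.app (hV.hasTy_trV.lift _) (hW.hasTy_trV.lift _)) (.var rfl))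
  | .ret hV => .lam (.app (.var rfl) (hV.hasTy_trV.lift _))
  | .letin hC hB =>
    .lam (.app (hC.hasTy_trC.lift _)
      (.lam (.app (hasTy_rename_upr_succ hB.hasTy_trC) (.var rfl))))
  | .opc hV hC =>
    .lam (.appArgs_ofFn _ (.app (.const (Sum.inr _)) (hV.hasTy_trV.lift _)) fun i =>
      .app ((hC.hasTy_trC.subst0 (hasTy_numStar i.isLt _)).lift _) (.var rfl))
  | .case hV hCs =>
    .lam (.appArgs_ofFn _ (hV.hasTy_trV.lift _) fun i =>
      .app ((hCs i).hasTy_trC.lift _) (.var rfl))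

end

end EPCF

open LamY LamY.Tm EPCF in
/-- The CPS translation from EPCF to the λY-calculus preserves typability:
if `Γ ⊢ V : T` in EPCF then `Γ* ⊢ V* : T*`, and if `Γ ⊢ C : U` in EPCF then
`Γ* ⊢ C* : ¬¬U*`. -/
theorem cps_preserves_typing {BV CV Op : Type}
    (cvTy : CV → BV) (opPar : Op → BV) (opAr : Op → ℕ) :
    (∀ (Γ : List (ETy BV)) (V : Val CV Op) (T : ETy BV),
        VTy cvTy opPar opAr Γ V T →
        HasTy (arF opAr) (Γ.map trTy) (trV opAr V) (trTy T)) ∧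
    (∀ (Γ : List (ETy BV)) (C : Comp CV Op) (U : ETy BV),
        CTy cvTy opPar opAr Γ C U →
        HasTy (arF opAr) (Γ.map trTy) (trC opAr C)
          (notTy (notTy (trTy U)))) :=
  ⟨fun _ _ _ h => h.hasTy_trV, fun _ _ _ h => h.hasTy_trC⟩
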